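/- arXiv:1101.2269 — 4 statements merged into one kernel-verified Lean document; each statement's English description precedes it below -/
import Mathlib

section
/- Let R be a (not necessarily unital) ring, n ≥ 2, and let p_1,…,p_{n-1} and q_1,…,q_{n-1} be elements of R such that p_j q_k = 0 whenever j ≥ k. Then for every x in R, the element x̄ = Σ_{j=1}^{n-1} q_j x p_j satisfies x̄^n = 0. -/
/-- `nupow x k` is the `(k+1)`-st power of `x` in a not-necessarily-unital ring. -/
def nupow {R : Type*} [NonUnitalRing R] (x : R) : ℕ → R
  | 0 => x
  | k + 1 => nupow x k * x

theorem stmt0 {R : Type*} [NonUnitalRing R] (n : ℕ) (hn : 2 ≤ n)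
    (p q : ℕ → R)
    (h : ∀ j k, j ∈ Finset.Icc 1 (n - 1) → k ∈ Finset.Icc 1 (n - 1) → k ≤ j →
      p j * q k = 0)
    (x : R) :
    nupow (∑ j ∈ Finset.Icc 1 (n - 1), q j * x * p j) (n - 1) = 0 := by
  set X := ∑ j ∈ Finset.Icc 1 (n - 1), q j * x * p j with hX
  have key : ∀ k, ∃ a : ℕ → R,
      nupow X k = ∑ j ∈ Finset.Icc (k + 1) (n - 1), a j * p j := by
    intro k
    induction k with
    | zero =>
      exact ⟨fun j => q j * x, hX⟩
    | succ k ih =>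
      obtain ⟨a, ha⟩ := ih
      refine ⟨fun i => (∑ j ∈ Finset.Icc (k + 1) (n - 1), a j * (p j * q i)) * x, ?_⟩
      have step : nupow X (k + 1) = nupow X k * X := rfl
      rw [step, ha, hX, Finset.sum_mul_sum]
      rw [Finset.sum_comm]
      have inner : ∀ i ∈ Finset.Icc 1 (n - 1),
          (∑ j ∈ Finset.Icc (k + 1) (n - 1), a j * p j * (q i * x * p i)) =
          ((∑ j ∈ Finset.Icc (k + 1) (n - 1), a j * (p j * q i)) * x) * p i := by
        intro i _
        rw [Finset.sum_mul, Finset.sum_mul]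
        exact Finset.sum_congr rfl fun j _ => by noncomm_ring
      rw [Finset.sum_congr rfl inner]
      symm
      apply Finset.sum_subset
      · intro i hi
        simp only [Finset.mem_Icc] at hi ⊢
        omega
      · intro i hi hni
        simp only [Finset.mem_Icc] at hi hni
        dsimp only
        have hiz : ∀ j ∈ Finset.Icc (k + 1) (n - 1), a j * (p j * q i) = 0 := by
          intro j hj
          have hj' := Finset.mem_Icc.mp hj
          rw [h j i (Finset.mem_Icc.mpr ⟨by omega, hj'.2⟩)
            (Finset.mem_Icc.mpr ⟨hi.1, hi.2⟩) (by omega), mul_zero]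
        rw [Finset.sum_congr rfl hiz, Finset.sum_const_zero, zero_mul, zero_mul]
  obtain ⟨a, ha⟩ := key (n - 1)
  rw [ha, Finset.Icc_eq_empty (by omega), Finset.sum_empty]
end

section
/- Let A be a C*-algebra, I a closed two-sided ideal, and π : A → A/I the quotient map. Suppose f₀, g₀ ∈ A/I satisfy 0 ≤ f₀ ≤ 1, 0 ≤ g₀ ≤ 1, and f₀ g₀ = 0. Then there exist f, g ∈ A with 0 ≤ f ≤ 1, 0 ≤ g ≤ 1, f g = 0, π(f) = f₀, and π(g) = g₀. -/
open scoped CStarAlgebra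

theorem stmt10 {A B : Type*} [CStarAlgebra A] [CStarAlgebra B]
    [PartialOrder A] [StarOrderedRing A] [PartialOrder B] [StarOrderedRing B]
    (π : A →⋆ₐ[ℂ] B) (hπ : Function.Surjective π)
    {f₀ g₀ : B} (hf0 : 0 ≤ f₀) (hf1 : f₀ ≤ 1) (hg0 : 0 ≤ g₀) (hg1 : g₀ ≤ 1)
    (hfg : f₀ * g₀ = 0) :
    ∃ f g : A, 0 ≤ f ∧ f ≤ 1 ∧ 0 ≤ g ∧ g ≤ 1 ∧ f * g = 0 ∧
      π f = f₀ ∧ π g = g₀ := by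
  obtain ⟨a, ha⟩ := hπ (f₀ - g₀)
  have hsaB : IsSelfAdjoint (f₀ - g₀) :=
    (IsSelfAdjoint.of_nonneg hf0).sub (IsSelfAdjoint.of_nonneg hg0)
  set h : A := (2⁻¹ : ℂ) • (a + star a) with hh
  have hhsa : IsSelfAdjoint h := by
    rw [hh]
    refine IsSelfAdjoint.smul ?_ (IsSelfAdjoint.add_star_self a)
    simp [IsSelfAdjoint, star_inv₀]
  have hπh : π h = f₀ - g₀ := by
    rw [hh, map_smul, map_add, map_star, ha, hsaB.star_eq, ← two_smul ℂ, smul_smul]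
    norm_num
  have hπc : Continuous π := map_continuous π
  -- the clipping functions
  set φ : ℝ → ℝ := fun t => max 0 (min t 1) with hφ
  set ψ : ℝ → ℝ := fun t => max 0 (min (-t) 1) with hψ
  have hφc : Continuous φ := by fun_prop
  have hψc : Continuous ψ := by fun_prop
  refine ⟨cfc φ h, cfc ψ h, ?_, ?_, ?_, ?_, ?_, ?_, ?_⟩
  · exact cfc_nonneg fun x _ => le_max_left _ _
  · exact cfc_le_one _ _ fun x _ => max_le (by norm_num) (min_le_right _ _)
  · exact cfc_nonneg fun x _ => le_max_left _ _
  · exact cfc_le_one _ _ fun x _ => max_le (by norm_num) (min_le_right _ _)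
  · rw [← cfc_mul φ ψ h]
    rw [show (fun x => φ x * ψ x) = 0 by
      funext t
      rcases le_total t 0 with ht | ht
      · have : φ t = 0 := by simp [hφ, min_eq_left (ht.trans zero_le_one), ht]
        simp [this]
      · have : ψ t = 0 := by
          simp only [hψ]
          rw [min_eq_left (by linarith), max_eq_left (by linarith)]
        simp [this]]
    exact cfc_zero _ _
  · -- π (cfc φ h) = f₀
    have key := StarAlgHomClass.map_cfc π φ h hφc.continuousOn hπc hhsa (hπh ▸ hsaB)
    rw [key, hπh]
    obtain ⟨hp, -⟩ := CFC.posPart_negPart_unique (a := f₀ - g₀) rfl hfg hf0 hg0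
    have hspec : spectrum ℝ (f₀ - g₀) ⊆ Set.Icc (-1) 1 := by
      intro x hx
      constructor
      · have h1 : algebraMap ℝ B (-1) ≤ f₀ - g₀ := by
          simp only [map_neg, map_one]
          calc (-1 : B) ≤ -g₀ := neg_le_neg hg1
          _ ≤ f₀ - g₀ := by simpa using hf0
        exact (algebraMap_le_iff_le_spectrum (a := f₀ - g₀) hsaB).mp h1 x hx
      · have h1 : f₀ - g₀ ≤ algebraMap ℝ B 1 := by
          simp only [map_one]
          calc f₀ - g₀ ≤ f₀ := by simpa using hg0
          _ ≤ 1 := hf1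
        exact (le_algebraMap_iff_spectrum_le (a := f₀ - g₀) hsaB).mp h1 x hx
    have : cfc φ (f₀ - g₀) = (f₀ - g₀)⁺ := by
      rw [CFC.posPart_def, cfcₙ_eq_cfc]
      refine cfc_congr fun x hx => ?_
      obtain ⟨hx1, hx2⟩ := hspec hx
      simp only [hφ]
      rw [min_eq_left hx2, max_comm]
      rfl
    rw [this, hp]
  · have key := StarAlgHomClass.map_cfc π ψ h hψc.continuousOn hπc hhsa (hπh ▸ hsaB)
    rw [key, hπh]
    obtain ⟨-, hn⟩ := CFC.posPart_negPart_unique (a := f₀ - g₀) rfl hfg hf0 hg0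
    have hspec : spectrum ℝ (f₀ - g₀) ⊆ Set.Icc (-1) 1 := by
      intro x hx
      constructor
      · have h1 : algebraMap ℝ B (-1) ≤ f₀ - g₀ := by
          simp only [map_neg, map_one]
          calc (-1 : B) ≤ -g₀ := neg_le_neg hg1
          _ ≤ f₀ - g₀ := by simpa using hf0
        exact (algebraMap_le_iff_le_spectrum (a := f₀ - g₀) hsaB).mp h1 x hx
      · have h1 : f₀ - g₀ ≤ algebraMap ℝ B 1 := by
          simp only [map_one]
          calc f₀ - g₀ ≤ f₀ := by simpa using hg0
          _ ≤ 1 := hf1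
        exact (le_algebraMap_iff_spectrum_le (a := f₀ - g₀) hsaB).mp h1 x hx
    have : cfc ψ (f₀ - g₀) = (f₀ - g₀)⁻ := by
      rw [CFC.negPart_def, cfcₙ_eq_cfc]
      refine cfc_congr fun x hx => ?_
      obtain ⟨hx1, hx2⟩ := hspec hx
      simp only [hψ]
      rw [min_eq_left (by linarith), max_comm]
      rfl
    rw [this, hn]
end

section
/- Let A be a C*-algebra, I a closed two-sided ideal, and π : A → A/I the quotient map. Then for every y ∈ A/I there exists x ∈ A with π(x) = y and ‖x‖ = ‖y‖, i.e. every element of the quotient admits a norm-preserving lift. -/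
theorem stmt14 {A B : Type*} [CStarAlgebra A] [CStarAlgebra B]
    (π : A →⋆ₐ[ℂ] B) (hπ : Function.Surjective π) (y : B) :
    ∃ x : A, π x = y ∧ ‖x‖ = ‖y‖ := by
  by_cases hy : y = 0
  · exact ⟨0, by simp [hy], by simp [hy]⟩
  obtain ⟨a, ha⟩ := hπ y
  have hy' : (0 : ℝ) < ‖y‖ := norm_pos_iff.mpr hy
  set f : ℝ → ℝ := fun t => ‖y‖ / Real.sqrt (max t (‖y‖ ^ 2)) with hf
  have hmaxpos : ∀ t : ℝ, 0 < max t (‖y‖ ^ 2) := fun t =>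
    lt_of_lt_of_le (by positivity) (le_max_right _ _)
  have hfc : Continuous f := by
    apply continuous_const.div
    · exact Real.continuous_sqrt.comp (continuous_id.max continuous_const)
    · intro t
      exact ne_of_gt (Real.sqrt_pos.mpr (hmaxpos t))
  set b : A := star a * a with hb_def
  have hb : IsSelfAdjoint b := IsSelfAdjoint.star_mul_self a
  have : Nontrivial B := ⟨⟨y, 0, hy⟩⟩
  have hπc : Continuous π := AddMonoidHomClass.continuous_of_bound π 1
    (by simpa using fun x => NonUnitalStarAlgHom.norm_apply_le π x)
  set h : A := cfc f b with hh_def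
  have hh_sa : IsSelfAdjoint h := cfc_predicate f b
  -- the image of b
  have hπb : π b = star y * y := by simp [hb_def, map_star, ha]
  have hπb_sa : IsSelfAdjoint (star y * y) := IsSelfAdjoint.star_mul_self y
  -- f is 1 on the spectrum of star y * y
  have hf_one : ∀ t ∈ spectrum ℝ (star y * y), f t = (1 : ℝ → ℝ) t := by
    intro t ht
    have hle : t ≤ ‖y‖ ^ 2 := by
      have := spectrum.norm_le_norm_of_mem ht
      rw [CStarRing.norm_star_mul_self] at this
      calc t ≤ |t| := le_abs_self t
        _ = ‖t‖ := (Real.norm_eq_abs t).symm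
        _ ≤ ‖y‖ * ‖y‖ := this
        _ = ‖y‖ ^ 2 := (sq ‖y‖).symm
    simp only [hf, Pi.one_apply, max_eq_right hle]
    rw [Real.sqrt_sq hy'.le, div_self hy'.ne']
  have hπh : π h = 1 := by
    rw [hh_def, StarAlgHom.map_cfc π f b hfc.continuousOn hπc hb (hπb ▸ hπb_sa),
      hπb, cfc_congr hf_one, cfc_one ℝ _]
  refine ⟨a * h, ?_, ?_⟩
  · rw [map_mul, ha, hπh, mul_one]
  · -- the key norm computation
    have hid : ContinuousOn (fun t : ℝ => t) (spectrum ℝ b) := continuousOn_id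
    have hxx : star (a * h) * (a * h) = cfc (fun t => f t * (t * f t)) b := by
      rw [cfc_mul f (fun t => t * f t) b hfc.continuousOn (hid.mul hfc.continuousOn),
        cfc_mul (fun t : ℝ => t) f b hid hfc.continuousOn, cfc_id' ℝ b hb, ← hh_def]
      rw [star_mul, hh_sa.star_eq]
      simp [mul_assoc, hb_def]
    have hnorm2 : ‖star (a * h) * (a * h)‖ ≤ ‖y‖ ^ 2 := by
      rw [hxx]
      apply norm_cfc_le (by positivity)
      intro t ht
      have ht0 : 0 ≤ t := spectrum_star_mul_self_nonneg t ht
      have hkey : f t * (t * f t) = ‖y‖ ^ 2 * (t / max t (‖y‖ ^ 2)) := by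
        have h1 : f t = ‖y‖ / Real.sqrt (max t (‖y‖ ^ 2)) := rfl
        have h2 : Real.sqrt (max t (‖y‖ ^ 2)) ≠ 0 := (Real.sqrt_pos.mpr (hmaxpos t)).ne'
        rw [h1]
        field_simp
        nlinarith [Real.mul_self_sqrt (hmaxpos t).le]
      rw [Real.norm_eq_abs, hkey, abs_of_nonneg (by positivity)]
      calc ‖y‖ ^ 2 * (t / max t (‖y‖ ^ 2)) ≤ ‖y‖ ^ 2 * 1 := by
            apply mul_le_mul_of_nonneg_left _ (by positivity)
            rw [div_le_one (hmaxpos t)]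
            exact le_max_left _ _
        _ = ‖y‖ ^ 2 := mul_one _
    have hle1 : ‖a * h‖ ≤ ‖y‖ := by
      have h2 : ‖a * h‖ * ‖a * h‖ ≤ ‖y‖ * ‖y‖ := by
        rw [← CStarRing.norm_star_mul_self]
        calc ‖star (a * h) * (a * h)‖ ≤ ‖y‖ ^ 2 := hnorm2
          _ = ‖y‖ * ‖y‖ := sq ‖y‖
      nlinarith [norm_nonneg (a * h), hy'.le]
    have hle2 : ‖y‖ ≤ ‖a * h‖ := by
      calc ‖y‖ = ‖π (a * h)‖ := by rw [map_mul, ha, hπh, mul_one]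
        _ ≤ ‖a * h‖ := NonUnitalStarAlgHom.norm_apply_le π _
    exact le_antisymm hle1 hle2
end

section
/- Let A be a unital ring, n ≥ 2, and suppose p_1,…,p_{n-1}, q_1,…,q_{n-1} ∈ A satisfy p_j q_k = 0 whenever j ≥ k. Then for any x̃, ỹ ∈ A, the elements x̄ = Σ_{j=1}^{n-1} q_j x̃ p_j and ȳ = Σ_{j=1}^{n-1} q_j ỹ p_j satisfy: every product of n factors, each factor being x̄ or ȳ, is zero. In particular x̄^n = 0, ȳ^n = 0, and (x̄ȳ)^m = 0 whenever 2m ≥ n. -/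
/-!
Filter `A` by the left ideals `L k` (`tailIdeal`) generated by the `p j` with `k ≤ j ≤ n - 1`.
An element of `L k` kills `q i` on the right for every `i ≤ k`, because `p j * q i = 0` for `i ≤ j`. Hence in
`a * Σ q i z p i` with `a ∈ L k` only the terms with `i > k` survive, and they lie in `L (k + 1)`.
A compressed element lies in `L 1`, so a product of `m` compressed elements lies in `L m`, which is
zero as soon as `m ≥ n`.
-/

namespace Compression

variable {A : Type*} [Ring A] (p q : ℕ → A) (N : ℕ)

def compress (z : A) : A := ∑ j ∈ Finset.Icc 1 N, q j * z * p j

def tailIdeal (k : ℕ) : Ideal A := Ideal.span (p '' Set.Icc k N)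

variable {p q N}

theorem tailIdeal_eq_bot {k : ℕ} (hk : N < k) : tailIdeal p N k = ⊥ := by
  rw [tailIdeal, Set.Icc_eq_empty (by omega), Set.image_empty, Ideal.span_empty]

theorem mem_tailIdeal {k j : ℕ} (hkj : k ≤ j) (hjN : j ≤ N) (c : A) :
    c * p j ∈ tailIdeal p N k :=
  Ideal.mul_mem_left _ c (Ideal.subset_span ⟨j, ⟨hkj, hjN⟩, rfl⟩)

theorem compress_mem_tailIdeal_one (z : A) : compress p q N z ∈ tailIdeal p N 1 :=
  Ideal.sum_mem _ fun j hj ↦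
    mem_tailIdeal (Finset.mem_Icc.1 hj).1 (Finset.mem_Icc.1 hj).2 (q j * z)

variable (hpq : ∀ j k, j ∈ Finset.Icc 1 N → k ∈ Finset.Icc 1 N → k ≤ j → p j * q k = 0)
include hpq

theorem mul_eq_zero_of_mem_tailIdeal {k i : ℕ} (hi : 1 ≤ i) (hik : i ≤ k) {a : A}
    (ha : a ∈ tailIdeal p N k) : a * q i = 0 := by
  suffices tailIdeal p N k ≤ LinearMap.ker (LinearMap.mulRight A (q i)) from this ha
  refine Submodule.span_le.2 ?_
  rintro _ ⟨j, ⟨hkj, hjN⟩, rfl⟩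
  exact hpq j i (Finset.mem_Icc.2 ⟨by omega, hjN⟩) (Finset.mem_Icc.2 ⟨hi, by omega⟩) (by omega)

theorem mul_compress_mem_tailIdeal {k : ℕ} {a : A} (ha : a ∈ tailIdeal p N k) (z : A) :
    a * compress p q N z ∈ tailIdeal p N (k + 1) := by
  rw [compress, Finset.mul_sum]
  refine Ideal.sum_mem _ fun i hi ↦ ?_
  obtain ⟨hi1, hiN⟩ := Finset.mem_Icc.1 hi
  by_cases hik : i ≤ k
  · rw [← mul_assoc, ← mul_assoc, mul_eq_zero_of_mem_tailIdeal hpq hi1 hik ha, zero_mul, zero_mul]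
    exact Ideal.zero_mem _
  · rw [← mul_assoc]
    exact mem_tailIdeal (by omega) hiN _

theorem mul_prod_mem_tailIdeal {ws : List A} (hws : ∀ w ∈ ws, w ∈ Set.range (compress p q N))
    {k : ℕ} {a : A} (ha : a ∈ tailIdeal p N k) :
    a * ws.prod ∈ tailIdeal p N (k + ws.length) := by
  induction ws generalizing a k with
  | nil => simpa using ha
  | cons w ws ih =>
    obtain ⟨z, rfl⟩ := hws w List.mem_cons_self
    rw [List.prod_cons, ← mul_assoc, List.length_cons, ← add_assoc, add_right_comm]
    exact ih (fun w hw ↦ hws w (List.mem_cons_of_mem _ hw)) (mul_compress_mem_tailIdeal hpq ha z)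

theorem prod_eq_zero_of_lt_length {ws : List A}
    (hws : ∀ w ∈ ws, w ∈ Set.range (compress p q N)) (hlen : N < ws.length) : ws.prod = 0 := by
  obtain _ | ⟨w, ws⟩ := ws
  · simp at hlen
  obtain ⟨z, rfl⟩ := hws w List.mem_cons_self
  have hmem := mul_prod_mem_tailIdeal hpq (fun w hw ↦ hws w (List.mem_cons_of_mem _ hw))
    (compress_mem_tailIdeal_one (q := q) z)
  rw [add_comm, ← List.length_cons, tailIdeal_eq_bot hlen] at hmem
  rwa [List.prod_cons, ← Submodule.mem_bot A]

end Compression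

open Compression in
theorem stmt15 {A : Type*} [Ring A] (n : ℕ) (hn : 2 ≤ n)
    (p q : ℕ → A)
    (h : ∀ j k, j ∈ Finset.Icc 1 (n - 1) → k ∈ Finset.Icc 1 (n - 1) → k ≤ j →
      p j * q k = 0)
    (x y : A) :
    (∀ w : Fin n → A,
      (∀ i, w i = ∑ j ∈ Finset.Icc 1 (n - 1), q j * x * p j ∨
            w i = ∑ j ∈ Finset.Icc 1 (n - 1), q j * y * p j) →
      (List.ofFn w).prod = 0) ∧
    (∑ j ∈ Finset.Icc 1 (n - 1), q j * x * p j) ^ n = 0 ∧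
    (∑ j ∈ Finset.Icc 1 (n - 1), q j * y * p j) ^ n = 0 ∧
    (∀ m : ℕ, n ≤ 2 * m →
      ((∑ j ∈ Finset.Icc 1 (n - 1), q j * x * p j) *
        (∑ j ∈ Finset.Icc 1 (n - 1), q j * y * p j)) ^ m = 0) := by
  have hx : compress p q (n - 1) x ∈ Set.range (compress p q (n - 1)) := ⟨x, rfl⟩
  have hy : compress p q (n - 1) y ∈ Set.range (compress p q (n - 1)) := ⟨y, rfl⟩
  have vanish := fun (ws : List A) hws (hlen : n ≤ ws.length) ↦
    prod_eq_zero_of_lt_length h (ws := ws) hws (by omega)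
  refine ⟨fun w hw ↦ vanish _ ?_ (by simp), ?_, ?_, fun m hm ↦ ?_⟩
  · simp only [List.mem_ofFn, forall_exists_index, forall_apply_eq_imp_iff]
    exact fun i ↦ (hw i).elim (· ▸ hx) (· ▸ hy)
  · rw [← List.prod_replicate]
    exact vanish _ (fun w hw ↦ List.eq_of_mem_replicate hw ▸ hx) (by simp)
  · rw [← List.prod_replicate]
    exact vanish _ (fun w hw ↦ List.eq_of_mem_replicate hw ▸ hy) (by simp)
  · have hprod : ((List.replicate m [compress p q (n - 1) x, compress p q (n - 1) y]).flatten).prod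
        = (compress p q (n - 1) x * compress p q (n - 1) y) ^ m := by
      simp [List.prod_flatten, List.map_replicate, List.prod_replicate]
    rw [compress, compress] at hprod
    rw [← hprod]
    refine vanish _ ?_ (by simp; omega)
    simp only [List.mem_flatten, List.mem_replicate]
    rintro w ⟨_, ⟨-, rfl⟩, hw⟩
    simp only [List.mem_cons, List.not_mem_nil, or_false] at hw
    exact hw.elim (· ▸ hx) (· ▸ hy)
end
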